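/- For every natural number k ≥ 1, C_{4k}(x) = t_k(x)·C_{2k}(x), and consequently C_{8k}(x) = t_{2k}(x)·C_{4k}(x). -/
import Mathlib

open Polynomial Real

noncomputable def t : ℕ → Polynomial ℝ
  | 0 => 2
  | 1 => Polynomial.X
  | (k+2) => Polynomial.X * t (k+1) - t k

lemma t_eval_aux (k : ℕ) (θ : ℝ) :
    (t k).eval (2 * cos θ) = 2 * cos (k * θ) ∧
    (t (k+1)).eval (2 * cos θ) = 2 * cos ((k+1) * θ) := by
  induction k with
  | zero => simp [t]
  | succ n ih =>
    refine ⟨by push_cast; exact_mod_cast ih.2, ?_⟩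
    show (t (n+2)).eval _ = _
    rw [show t (n+2) = Polynomial.X * t (n+1) - t n from rfl]
    simp only [eval_sub, eval_mul, eval_X, ih.1, ih.2]
    have h1 := Real.cos_add ((n+1) * θ) θ
    have h2 := Real.cos_sub ((n+1) * θ) θ
    push_cast
    have e1 : ((n:ℝ)+1+1) * θ = (n+1)*θ + θ := by ring
    have e2 : (n:ℝ) * θ = (n+1)*θ - θ := by ring
    rw [e1, e2, h1, h2]; ring

lemma t_eval (k : ℕ) (θ : ℝ) : (t k).eval (2 * cos θ) = 2 * cos (k * θ) :=
  (t_eval_aux k θ).1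

lemma t_deg_aux (k : ℕ) :
    ((t k).natDegree ≤ k ∧ (t k).coeff k = if k = 0 then 2 else 1) ∧
    ((t (k+1)).natDegree ≤ k+1 ∧ (t (k+1)).coeff (k+1) = 1) := by
  induction k with
  | zero =>
    refine ⟨⟨?_, ?_⟩, ?_, ?_⟩ <;> simp [t]
  | succ n ih =>
    refine ⟨⟨ih.2.1, by simpa using ih.2.2⟩, ?_, ?_⟩
    · show (t (n+2)).natDegree ≤ n+2
      rw [show t (n+2) = Polynomial.X * t (n+1) - t n from rfl]
      refine le_trans (natDegree_sub_le _ _) (max_le ?_ (le_trans ih.1.1 (by omega)))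
      refine le_trans (natDegree_mul_le) ?_
      have := ih.2.1; simp only [Polynomial.natDegree_X]; omega
    · show (t (n+2)).coeff (n+2) = 1
      rw [show t (n+2) = Polynomial.X * t (n+1) - t n from rfl]
      rw [coeff_sub, Polynomial.coeff_X_mul, ih.2.2,
        Polynomial.coeff_eq_zero_of_natDegree_lt (lt_of_le_of_lt ih.1.1 (by omega))]
      ring

lemma t_natDegree (k : ℕ) (hk : 1 ≤ k) : (t k).natDegree = k := by
  have h := (t_deg_aux k).1
  refine le_antisymm h.1 (Polynomial.le_natDegree_of_ne_zero ?_)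
  rw [h.2, if_neg (by omega)]; norm_num

lemma t_monic (k : ℕ) (hk : 1 ≤ k) : (t k).Monic := by
  have h := (t_deg_aux k).1
  unfold Polynomial.Monic Polynomial.leadingCoeff
  rw [t_natDegree k hk, h.2, if_neg (by omega)]

lemma root_injOn (k : ℕ) (hk : 1 ≤ k) : ∀ i ∈ Finset.Icc 1 k, ∀ j ∈ Finset.Icc 1 k,
    2 * cos ((2*(i:ℝ) - 1) * π / (2*k)) = 2 * cos ((2*(j:ℝ) - 1) * π / (2*k)) → i = j := by
  intro i hi j hj h
  simp only [Finset.mem_Icc] at hi hj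
  have hkpos : (0:ℝ) < k := by exact_mod_cast Nat.pos_of_ne_zero (by omega)
  have hπ := pi_pos
  have hmem : ∀ m : ℕ, 1 ≤ m → m ≤ k → (2*(m:ℝ) - 1) * π / (2*k) ∈ Set.Icc 0 π := by
    intro m h1 h2
    have h1' : (1:ℝ) ≤ m := by exact_mod_cast h1
    have h2' : (m:ℝ) ≤ k := by exact_mod_cast h2
    constructor
    · apply div_nonneg (by nlinarith) (by positivity)
    · rw [div_le_iff₀ (by positivity)]
      nlinarith
  have heq := Real.injOn_cos (hmem i hi.1 hi.2) (hmem j hj.1 hj.2) (by linarith)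
  rw [mul_div_assoc, mul_div_assoc] at heq
  have h2 := mul_right_cancel₀ (show π/(2*(k:ℝ)) ≠ 0 by positivity) heq
  have : (i:ℝ) = j := by linarith
  exact_mod_cast this

lemma t_eq_prod (k : ℕ) (hk : 1 ≤ k) :
    t k = ∏ i ∈ Finset.Icc 1 k,
      (Polynomial.X - Polynomial.C (2 * cos ((2*(i:ℝ) - 1) * π / (2*k)))) := by
  have hkpos : (0:ℝ) < k := by exact_mod_cast Nat.pos_of_ne_zero (by omega)
  set f : ℕ → Polynomial ℝ :=
    fun i => Polynomial.X - Polynomial.C (2 * cos ((2*(i:ℝ) - 1) * π / (2*k))) with hf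
  have hmon : (∏ i ∈ Finset.Icc 1 k, f i).Monic :=
    monic_prod_of_monic _ _ fun i _ => monic_X_sub_C _
  have hdeg : (∏ i ∈ Finset.Icc 1 k, f i).natDegree = k := by
    rw [Polynomial.natDegree_prod _ _ (fun i _ => X_sub_C_ne_zero _)]
    simp only [hf, natDegree_X_sub_C, Finset.sum_const, smul_eq_mul, mul_one, Nat.card_Icc]
    omega
  have hdvd : (∏ i ∈ Finset.Icc 1 k, f i) ∣ t k := by
    apply Finset.prod_dvd_of_coprime
    · intro i hi j hj hij
      simp only [Function.onFun, hf]
      apply Polynomial.isCoprime_X_sub_C_of_isUnit_sub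
      rw [isUnit_iff_ne_zero, sub_ne_zero]
      intro h
      exact hij (root_injOn k hk i hi j hj h)
    · intro i hi
      rw [Polynomial.dvd_iff_isRoot]
      show Polynomial.IsRoot _ (2 * cos _)
      rw [Polynomial.IsRoot, t_eval]
      have h1 : (k:ℝ) * ((2*(i:ℝ) - 1) * π / (2*k)) = (2*(i:ℝ) - 1) * π / 2 := by
        field_simp
      rw [h1]
      have h2 : cos ((2*(i:ℝ) - 1) * π / 2) = 0 := by
        rw [Real.cos_eq_zero_iff]
        exact ⟨(i:ℤ) - 1, by push_cast; ring⟩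
      rw [h2]; ring
  exact Polynomial.eq_of_monic_of_dvd_of_natDegree_le hmon (t_monic k hk) hdvd
    (by rw [hdeg, t_natDegree k hk])

noncomputable def Cpoly (n : ℕ) : Polynomial ℝ :=
  ∏ j ∈ Finset.Icc 1 ((n - 1) / 2),
    (Polynomial.X - Polynomial.C (2 * Real.cos (2 * j * Real.pi / n)))

lemma Cpoly_key (k : ℕ) (hk : 1 ≤ k) : Cpoly (4 * k) = t k * Cpoly (2 * k) := by
  have hkpos : (0:ℝ) < k := by exact_mod_cast Nat.pos_of_ne_zero (by omega)
  have h4 : (4 * k - 1) / 2 = 2 * k - 1 := by omega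
  have h2 : (2 * k - 1) / 2 = k - 1 := by omega
  unfold Cpoly
  rw [h4, h2]
  rw [← Finset.prod_filter_mul_prod_filter_not (Finset.Icc 1 (2*k-1)) (fun j => j % 2 = 1)]
  have hodd : Finset.filter (fun j => j % 2 = 1) (Finset.Icc 1 (2*k-1))
      = Finset.image (fun i => 2*i - 1) (Finset.Icc 1 k) := by
    ext j
    simp only [Finset.mem_filter, Finset.mem_image, Finset.mem_Icc]
    constructor
    · rintro ⟨⟨h1, h2⟩, h3⟩; exact ⟨(j+1)/2, by omega, by omega⟩
    · rintro ⟨i, ⟨h1, h2⟩, rfl⟩; omega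
  have heven : Finset.filter (fun j => ¬ j % 2 = 1) (Finset.Icc 1 (2*k-1))
      = Finset.image (fun i => 2*i) (Finset.Icc 1 (k-1)) := by
    ext j
    simp only [Finset.mem_filter, Finset.mem_image, Finset.mem_Icc]
    constructor
    · rintro ⟨⟨h1, h2⟩, h3⟩; exact ⟨j/2, by omega, by omega⟩
    · rintro ⟨i, ⟨h1, h2⟩, rfl⟩; omega
  rw [hodd, heven,
    Finset.prod_image (fun i hi j hj h => by omega),
    Finset.prod_image (fun i hi j hj h => by omega)]
  congr 1
  · rw [t_eq_prod k hk]
    apply Finset.prod_congr rfl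
    intro i hi
    simp only [Finset.mem_Icc] at hi
    congr 3
    have : ((2*i - 1 : ℕ) : ℝ) = 2*(i:ℝ) - 1 := by
      push_cast [Nat.cast_sub (by omega : 1 ≤ 2*i)]; ring
    rw [this]
    push_cast
    congr 1
    rw [div_eq_div_iff (by linarith : (0:ℝ) < 4*(k:ℝ)).ne' (by linarith : (0:ℝ) < 2*(k:ℝ)).ne']
    ring
  · apply Finset.prod_congr rfl
    intro i hi
    congr 3
    push_cast
    congr 1
    rw [div_eq_div_iff (by linarith : (0:ℝ) < 4*(k:ℝ)).ne' (by linarith : (0:ℝ) < 2*(k:ℝ)).ne']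
    ring

theorem Cpoly_four_mul (k : ℕ) (hk : 1 ≤ k) :
    Cpoly (4 * k) = t k * Cpoly (2 * k) ∧ Cpoly (8 * k) = t (2 * k) * Cpoly (4 * k) := by
  refine ⟨Cpoly_key k hk, ?_⟩
  have := Cpoly_key (2 * k) (by omega)
  rw [show 4 * (2 * k) = 8 * k by ring, show 2 * (2 * k) = 4 * k by ring] at this
  exact this
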